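/- arXiv:1207.5712 — 2 statements merged into one kernel-verified Lean document; each statement's English description precedes it below -/
import Mathlib

section
/- Let G be the simple graph on vertex set {1,...,7} with edge set E = {{1,2},{1,4},{1,6},{1,7},{2,3},{2,4},{2,5},{2,6},{2,7},{3,5},{3,6},{3,7},{4,5},{4,6},{5,7},{6,7}} (the graph G1228 of the atlas). Then msr(G) = 3; that is, there exists a 7×7 Hermitian positive semidefinite complex matrix with graph G of rank 3, and every 7×7 Hermitian positive semidefinite complex matrix with graph G has rank at least 3. -/
open Matrix ComplexOrder

/-- The edge set of the graph G1228 on vertices 1,...,7. -/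
def edgesG1228 : Set (Sym2 ℕ) :=
  {s(1, 2), s(1, 4), s(1, 6), s(1, 7), s(2, 3), s(2, 4), s(2, 5), s(2, 6), s(2, 7), s(3, 5), s(3, 6), s(3, 7), s(4, 5), s(4, 6), s(5, 7), s(6, 7)}

/-- `M` has graph G1228: for `i ≠ j`, `M i j ≠ 0` iff `{i+1, j+1}` is an edge of G1228. -/
def HasGraphG1228 (M : Matrix (Fin 7) (Fin 7) ℂ) : Prop :=
  ∀ i j : Fin 7, i ≠ j → (M i j ≠ 0 ↔ s((i : ℕ) + 1, (j : ℕ) + 1) ∈ edgesG1228)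

/-!
The upper bound is witnessed by the Gram matrix of seven integer vectors in `ℂ³` whose pairwise
inner products vanish exactly on the non-edges of G1228.

For the lower bound, since `13`, `15` and `43` are non-edges, the `3 × 3` minor of `M` on rows
`1, 4, 3` and columns `1, 5, 3` is lower triangular with diagonal `M₁₁, M₄₅, M₃₃`. Here `M₄₅ ≠ 0`
since `45` is an edge, and `M₁₁, M₃₃ ≠ 0` since `12` and `35` are edges while a positive
semidefinite matrix with a zero diagonal entry has a zero row.
-/

namespace Matrix

theorem card_le_rank_of_det_submatrix_ne_zero {K m n p : Type*} [Field K] [Fintype n]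
    [Fintype p] [DecidableEq p] (A : Matrix m n K) (r : p → m) (c : p → n)
    (h : (A.submatrix r c).det ≠ 0) : Fintype.card p ≤ A.rank := by
  rw [← rank_of_isUnit _ ((isUnit_iff_isUnit_det _).mpr h.isUnit)]
  exact rank_submatrix_le A r c

theorem PosSemidef.apply_eq_zero_of_diag_eq_zero {𝕜 n : Type*} [RCLike 𝕜] [Fintype n]
    [DecidableEq n] {A : Matrix n n 𝕜} (hA : A.PosSemidef) {i : n} (hi : A i i = 0) (j : n) :
    A i j = 0 := by
  have hcol : A *ᵥ Pi.single i 1 = 0 :=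
    (hA.dotProduct_mulVec_zero_iff _).mp (by simp [mulVec_single, hi])
  have hji : A j i = 0 := by simpa [mulVec_single] using congrFun hcol j
  rw [← hA.1.apply i j, hji, star_zero]

theorem map_intCast_transpose_mul_self {R m n : Type*} [Ring R] [StarRing R] [Fintype m]
    (B : Matrix m n ℤ) :
    (Bᵀ * B).map (Int.cast : ℤ → R) =
      (B.map (Int.cast : ℤ → R))ᴴ * B.map (Int.cast : ℤ → R) := by
  ext i j
  simp [mul_apply]

end Matrix

def edgeFinsetG1228 : Finset (Sym2 ℕ) :=
  {s(1, 2), s(1, 4), s(1, 6), s(1, 7), s(2, 3), s(2, 4), s(2, 5), s(2, 6), s(2, 7), s(3, 5),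
    s(3, 6), s(3, 7), s(4, 5), s(4, 6), s(5, 7), s(6, 7)}

theorem coe_edgeFinsetG1228 : (edgeFinsetG1228 : Set (Sym2 ℕ)) = edgesG1228 := by
  simp [edgeFinsetG1228, edgesG1228]

theorem hasGraphG1228_iff {M : Matrix (Fin 7) (Fin 7) ℂ} :
    HasGraphG1228 M ↔
      ∀ i j : Fin 7, i ≠ j →
        (M i j ≠ 0 ↔ s((i : ℕ) + 1, (j : ℕ) + 1) ∈ edgeFinsetG1228) := by
  simp only [HasGraphG1228, ← Finset.mem_coe, coe_edgeFinsetG1228]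

theorem hasGraphG1228_map_intCast_iff (Z : Matrix (Fin 7) (Fin 7) ℤ) :
    HasGraphG1228 (Z.map (Int.cast : ℤ → ℂ)) ↔
      ∀ i j : Fin 7, i ≠ j →
        (Z i j ≠ 0 ↔ s((i : ℕ) + 1, (j : ℕ) + 1) ∈ edgeFinsetG1228) := by
  simp only [hasGraphG1228_iff, map_apply, ne_eq, Int.cast_eq_zero]

namespace HasGraphG1228

variable {M : Matrix (Fin 7) (Fin 7) ℂ} {i j : Fin 7}

theorem apply_eq_zero (hM : HasGraphG1228 M) (hij : i ≠ j)
    (he : s((i : ℕ) + 1, (j : ℕ) + 1) ∉ edgeFinsetG1228) : M i j = 0 :=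
  not_not.mp fun h => he ((hasGraphG1228_iff.mp hM i j hij).mp h)

theorem apply_ne_zero (hM : HasGraphG1228 M) (hij : i ≠ j)
    (he : s((i : ℕ) + 1, (j : ℕ) + 1) ∈ edgeFinsetG1228) : M i j ≠ 0 :=
  (hasGraphG1228_iff.mp hM i j hij).mpr he

theorem three_le_rank (hM : HasGraphG1228 M) (hpsd : M.PosSemidef) : 3 ≤ M.rank := by
  have h02 : M 0 2 = 0 := hM.apply_eq_zero (by decide) (by decide)
  have h04 : M 0 4 = 0 := hM.apply_eq_zero (by decide) (by decide)
  have h32 : M 3 2 = 0 := hM.apply_eq_zero (by decide) (by decide)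
  have h00 : M 0 0 ≠ 0 :=
    mt (hpsd.apply_eq_zero_of_diag_eq_zero · 1) (hM.apply_ne_zero (by decide) (by decide))
  have h22 : M 2 2 ≠ 0 :=
    mt (hpsd.apply_eq_zero_of_diag_eq_zero · 4) (hM.apply_ne_zero (by decide) (by decide))
  have h34 : M 3 4 ≠ 0 := hM.apply_ne_zero (by decide) (by decide)
  have hdet : (M.submatrix ![0, 3, 2] ![0, 4, 2]).det = M 0 0 * M 3 4 * M 2 2 := by
    rw [det_fin_three]
    simp [h02, h04, h32]
  simpa using M.card_le_rank_of_det_submatrix_ne_zero ![0, 3, 2] ![0, 4, 2]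
    (by rw [hdet]; exact mul_ne_zero (mul_ne_zero h00 h34) h22)

end HasGraphG1228

/-- Vertex `k + 1` is represented by column `k`. -/
def reprG1228 : Matrix (Fin 3) (Fin 7) ℤ :=
  !![1, 1, 0, 1, 0, 1, 1; 0, 1, 1, 0, 1, 2, 3; 0, 1, 0, 1, 1, -2, -1]

def gramReprG1228 : Matrix (Fin 7) (Fin 7) ℂ :=
  (reprG1228ᵀ * reprG1228).map Int.cast

theorem posSemidef_gramReprG1228 : gramReprG1228.PosSemidef := by
  rw [gramReprG1228, map_intCast_transpose_mul_self]
  exact posSemidef_conjTranspose_mul_self _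

theorem hasGraphG1228_gramReprG1228 : HasGraphG1228 gramReprG1228 :=
  (hasGraphG1228_map_intCast_iff _).mpr (by decide)

theorem rank_gramReprG1228 : gramReprG1228.rank = 3 := by
  rw [gramReprG1228, map_intCast_transpose_mul_self, rank_conjTranspose_mul_self]
  refine le_antisymm ((rank_le_card_height _).trans_eq (Fintype.card_fin 3)) ?_
  have hdet : (reprG1228.submatrix id ![0, 2, 3]).det = 1 := by decide
  simpa using (reprG1228.map (Int.cast : ℤ → ℂ)).card_le_rank_of_det_submatrix_ne_zero
    id ![0, 2, 3] (by rw [submatrix_map, ← Int.cast_det, hdet, Int.cast_one]; exact one_ne_zero)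

/-- msr(G1228) = 3. -/
theorem msr_G1228 :
    (∃ M : Matrix (Fin 7) (Fin 7) ℂ, M.PosSemidef ∧ HasGraphG1228 M ∧ M.rank = 3) ∧
    (∀ M : Matrix (Fin 7) (Fin 7) ℂ, M.PosSemidef → HasGraphG1228 M → 3 ≤ M.rank) :=
  ⟨⟨gramReprG1228, posSemidef_gramReprG1228, hasGraphG1228_gramReprG1228, rank_gramReprG1228⟩,
    fun _ hpsd hM => hM.three_le_rank hpsd⟩
end

section
/- Let G be the simple graph on vertex set {1,...,7} with edge set E = {{1,2},{1,3},{1,4},{1,5},{1,6},{2,4},{2,5},{2,7},{3,4},{3,6},{3,7},{4,5},{4,6},{5,7},{6,7}} (the graph G1211 of the atlas). Then msr(G) = 2; that is, there exists a 7×7 Hermitian positive semidefinite complex matrix with graph G of rank 2, and every 7×7 Hermitian positive semidefinite complex matrix with graph G has rank at least 2. -/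
/-!
A PSD matrix with a nonzero off-diagonal entry `M a b` has `M a a ≠ 0` (its `2 × 2` principal
minors are nonnegative), so along the induced path `1 – 2 – 7` of `G` the minor on rows `{1, 7}`
and columns `{1, 2}` is triangular with nonzero diagonal, forcing rank at least `2`. Conversely,
the Gram matrix of the vectors `(1,1)` at vertices `1, 4`, `(1,0)` at `2, 5`, `(0,1)` at `3, 6`
and `(1,-1)` at `7` has graph `G` and rank at most `2`.
-/

open Matrix ComplexOrder

/-- The edge set of the graph G1211 on vertices 1,...,7. -/
def edgesG1211 : Set (Sym2 ℕ) :=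
  {s(1, 2), s(1, 3), s(1, 4), s(1, 5), s(1, 6), s(2, 4), s(2, 5), s(2, 7), s(3, 4), s(3, 6), s(3, 7), s(4, 5), s(4, 6), s(5, 7), s(6, 7)}

/-- `M` has graph G1211: for `i ≠ j`, `M i j ≠ 0` iff `{i+1, j+1}` is an edge of G1211. -/
def HasGraphG1211 (M : Matrix (Fin 7) (Fin 7) ℂ) : Prop :=
  ∀ i j : Fin 7, i ≠ j → (M i j ≠ 0 ↔ s((i : ℕ) + 1, (j : ℕ) + 1) ∈ edgesG1211)

theorem Matrix.card_le_rank_of_det_submatrix_ne_zero_s17 {m n k K : Type*} [Fintype n] [Fintype k]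
    [DecidableEq k] [Field K] {A : Matrix m n K} (r : k → m) (c : k → n)
    (h : (A.submatrix r c).det ≠ 0) : Fintype.card k ≤ A.rank := by
  rw [← rank_of_isUnit _ ((isUnit_iff_isUnit_det _).mpr h.isUnit)]
  exact rank_submatrix_le A r c

theorem Matrix.map_intCast_mul_conjTranspose {m n 𝕜 : Type*} [Fintype n] [RCLike 𝕜]
    (A : Matrix m n ℤ) :
    A.map (Int.cast : ℤ → 𝕜) * (A.map (Int.cast : ℤ → 𝕜))ᴴ = (A * Aᵀ).map Int.cast := by
  ext i j
  simp [mul_apply]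

namespace Matrix.PosSemidef

variable {n 𝕜 : Type*} [RCLike 𝕜] {M : Matrix n n 𝕜}

theorem apply_eq_zero_of_diag_eq_zero_s17 (hM : M.PosSemidef) {i : n} (hi : M i i = 0) (j : n) :
    M i j = 0 := by
  have hdet := (hM.submatrix ![i, j]).det_nonneg
  rw [det_fin_two] at hdet
  simp only [submatrix_apply, cons_val_zero, cons_val_one, hi, zero_mul, zero_sub,
    ← hM.isHermitian.apply i j] at hdet
  have hji : star (M j i) * M j i = 0 :=
    le_antisymm (neg_nonneg.mp hdet) (star_mul_self_nonneg _)
  rw [← hM.isHermitian.apply i j, (CStarRing.star_mul_self_eq_zero_iff _).mp hji, star_zero]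

theorem two_le_rank_of_induced_path [Fintype n] (hM : M.PosSemidef) {a b c : n}
    (hab : M a b ≠ 0) (hcb : M c b ≠ 0) (hca : M c a = 0) : 2 ≤ M.rank := by
  have haa : M a a ≠ 0 := fun h => hab (hM.apply_eq_zero_of_diag_eq_zero_s17 h b)
  simpa using card_le_rank_of_det_submatrix_ne_zero_s17 ![a, c] ![a, b]
    (by rw [det_fin_two]; simp [hca, haa, hcb])

end Matrix.PosSemidef

theorem two_le_rank_of_hasGraphG1211 {M : Matrix (Fin 7) (Fin 7) ℂ} (hM : M.PosSemidef)
    (hG : HasGraphG1211 M) : 2 ≤ M.rank :=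
  hM.two_le_rank_of_induced_path (a := 0) (b := 1) (c := 6)
    ((hG 0 1 (by decide)).mpr (by simp [edgesG1211]))
    ((hG 6 1 (by decide)).mpr (by simp [edgesG1211]))
    (not_ne_iff.mp (mt (hG 6 0 (by decide)).mp (by simp [edgesG1211])))

-- Integer entries make the sign pattern of the Gram matrix decidable.
def gramVectorsG1211 : Matrix (Fin 7) (Fin 2) ℤ :=
  !![1, 1; 1, 0; 0, 1; 1, 1; 1, 0; 0, 1; 1, -1]

theorem hasGraphG1211_gram :
    HasGraphG1211 (gramVectorsG1211.map (Int.cast : ℤ → ℂ) *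
      (gramVectorsG1211.map (Int.cast : ℤ → ℂ))ᴴ) := by
  have hpattern : ∀ i j : Fin 7, i ≠ j → ((gramVectorsG1211 * gramVectorsG1211ᵀ) i j ≠ 0 ↔
      s((i : ℕ) + 1, (j : ℕ) + 1) ∈ edgesG1211) := by
    simp only [edgesG1211, Set.mem_insert_iff, Set.mem_singleton_iff]
    decide
  intro i j hij
  rw [map_intCast_mul_conjTranspose, map_apply, Ne, Int.cast_eq_zero]
  exact hpattern i j hij

/-- msr(G1211) = 2. -/
theorem msr_G1211 :
    (∃ M : Matrix (Fin 7) (Fin 7) ℂ, M.PosSemidef ∧ HasGraphG1211 M ∧ M.rank = 2) ∧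
    (∀ M : Matrix (Fin 7) (Fin 7) ℂ, M.PosSemidef → HasGraphG1211 M → 2 ≤ M.rank) := by
  refine ⟨?_, fun M hM hG => two_le_rank_of_hasGraphG1211 hM hG⟩
  set A := gramVectorsG1211.map (Int.cast : ℤ → ℂ)
  have hPSD : (A * Aᴴ).PosSemidef := posSemidef_self_mul_conjTranspose A
  refine ⟨A * Aᴴ, hPSD, hasGraphG1211_gram,
    le_antisymm ?_ (two_le_rank_of_hasGraphG1211 hPSD hasGraphG1211_gram)⟩
  exact (rank_mul_le_left A Aᴴ).trans (rank_le_width A)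
end
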